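/- Let A ∈ ℤ^{k×n} with (1,…,1) ∈ row(A), whose columns a_i span the polytope Q_A, and let O ⊆ [n]. If O is not contained in any maximal cell of the regular subdivision Δ_{e_O} of Q_A (weights e_O the indicator vector of O), then O is not a face of Q_A. Equivalently (contrapositive direction proved in the paper): if there exists a basis τ ⊇ O of M(A) such that Aᵀ(A_τᵀ)^{-1}(e_O)_τ ≤ e_O entrywise, then the linear functional ψ(x) = ⟨(A_τᵀ)^{-1}(e_O)_τ, x⟩ on ℝ^k is maximized over {a₁,…,a_n} exactly on {a_i : i ∈ O}, so O is a face of Q_A. -/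
import Mathlib


/-- The `k × k` submatrix `A_τ` of `A` with columns indexed by `τ`. -/
noncomputable def Asub {k n : ℕ} (A : Matrix (Fin k) (Fin n) ℝ) (τ : Finset (Fin n))
    (h : τ.card = k) : Matrix (Fin k) (Fin k) ℝ :=
  A.submatrix id (fun r => ((τ.orderIsoOfFin h r : Fin n)))

/-- The point `Aᵀ (A_τᵀ)⁻¹ ω_τ`. -/
noncomputable def qhat {k n : ℕ} (A : Matrix (Fin k) (Fin n) ℝ) (τ : Finset (Fin n))
    (h : τ.card = k) (ω : Fin n → ℝ) : Fin n → ℝ :=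
  fun j => ∑ r, A r j * ((Asub A τ h).transpose⁻¹.mulVec
    (fun s => ω ((τ.orderIsoOfFin h s : Fin n)))) r

/-- The 0/1 indicator vector of `O ⊆ [n]`. -/
def indic {n : ℕ} (O : Finset (Fin n)) : Fin n → ℝ := fun i => if i ∈ O then 1 else 0

/-- `O` is a face of `Q_A`: some linear functional on `ℝᵏ` is maximized over the columns of
`A` exactly on the columns indexed by `O`. -/
def IsFace {k n : ℕ} (A : Matrix (Fin k) (Fin n) ℝ) (O : Finset (Fin n)) : Prop :=
  ∃ (ψ : Fin k → ℝ) (c : ℝ), ∀ i : Fin n,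
    (∑ r, ψ r * A r i ≤ c) ∧ (∑ r, ψ r * A r i = c ↔ i ∈ O)

/-- contrapositive direction: if there is a basis `τ ⊇ O` of `M(A)` with
`Aᵀ(A_τᵀ)⁻¹ (e_O)_τ ≤ e_O` entrywise, then the linear functional
`ψ(x) = ⟨(A_τᵀ)⁻¹(e_O)_τ, x⟩` is maximized over the columns of `A` exactly on
`{a_i : i ∈ O}` (with maximum value `1`), so `O` is a face of `Q_A`. Hence, if `O` is not
contained in any maximal cell of the regular subdivision `Δ_{e_O}`, then `O` is not a face
of `Q_A`. -/
theorem face_of_subdivision_inequality {k n : ℕ} (A : Matrix (Fin k) (Fin n) ℝ)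
    (hint : ∀ i j, ∃ z : ℤ, A i j = (z : ℝ))
    (hones : ∃ y : Fin k → ℝ, ∀ j, ∑ i, y i * A i j = 1)
    (O τ : Finset (Fin n)) (hOτ : O ⊆ τ)
    (hcard : τ.card = k) (hdet : (Asub A τ hcard).det ≠ 0)
    (hineq : ∀ i, qhat A τ hcard (indic O) i ≤ indic O i) :
    (∀ i : Fin n,
      (∑ r, ((Asub A τ hcard).transpose⁻¹.mulVec
          (fun s => indic O ((τ.orderIsoOfFin hcard s : Fin n)))) r * A r i ≤ 1) ∧
      ((∑ r, ((Asub A τ hcard).transpose⁻¹.mulVec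
          (fun s => indic O ((τ.orderIsoOfFin hcard s : Fin n)))) r * A r i = 1) ↔ i ∈ O)) ∧
    IsFace A O := by
  set M : Matrix (Fin k) (Fin k) ℝ := (Asub A τ hcard).transpose with hM
  set v : Fin k → ℝ := fun s => indic O ((τ.orderIsoOfFin hcard s : Fin n)) with hv
  set ψ : Fin k → ℝ := M⁻¹.mulVec v with hψ
  have hdetM : IsUnit M.det := by
    rw [hM, Matrix.det_transpose]; exact isUnit_iff_ne_zero.mpr hdet
  have hMψ : M.mulVec ψ = v := by
    rw [hψ, Matrix.mulVec_mulVec, Matrix.mul_nonsing_inv _ hdetM, Matrix.one_mulVec]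
  -- key: for indices in τ, the functional value equals indic O
  have hkey : ∀ s : Fin k, ∑ r, ψ r * A r ((τ.orderIsoOfFin hcard s : Fin n)) = v s := by
    intro s
    have := congrFun hMψ s
    rw [Matrix.mulVec, dotProduct] at this
    rw [← this]
    refine Finset.sum_congr rfl fun r _ => ?_
    simp [hM, Asub, Matrix.transpose_apply, Matrix.submatrix_apply, mul_comm]
  have hq : ∀ i, ∑ r, ψ r * A r i = qhat A τ hcard (indic O) i := by
    intro i
    unfold qhat
    exact Finset.sum_congr rfl fun r _ => mul_comm _ _
  have main : ∀ i : Fin n,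
      (∑ r, ψ r * A r i ≤ 1) ∧ ((∑ r, ψ r * A r i = 1) ↔ i ∈ O) := by
    intro i
    by_cases hiO : i ∈ O
    · have hiτ : i ∈ τ := hOτ hiO
      set s : Fin k := (τ.orderIsoOfFin hcard).symm ⟨i, hiτ⟩ with hs
      have hemb : ((τ.orderIsoOfFin hcard s : Fin n)) = i := by
        simp [hs]
      have := hkey s
      rw [hemb] at this
      have hv1 : v s = 1 := by
        rw [hv]; simp only [hemb]; simp [indic, hiO]
      rw [this, hv1]
      exact ⟨le_refl 1, by simp [hiO]⟩
    · have hle : ∑ r, ψ r * A r i ≤ 0 := by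
        rw [hq i]
        have := hineq i
        simpa [indic, hiO] using this
      constructor
      · linarith
      · constructor
        · intro h; linarith
        · intro h; exact absurd h hiO
  refine ⟨main, ψ, 1, main⟩
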